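/- arXiv:1905.10897 — 6 statements merged into one kernel-verified Lean document; each statement's English description precedes it below -/
import Mathlib

section
/- Let f : ℕ → ℂ be a multiplicative function whose range is a finite set. Then the set of primes p such that |f(p^e)| > 1 for some integer e ≥ 1 is finite, and the set of primes p such that 0 < |f(p^e)| < 1 for some integer e ≥ 1 is finite. -/
/-!
Call `z` bad if `0 < ‖z‖ ≠ 1`, and fix for each offending prime `p` an exponent `e p` with
`f (p ^ e p)` bad. Since `f` takes only finitely many values, if there were infinitely many
such primes then infinitely many of them would share one value `z`; multiplying `n + 1` of the
coprime prime powers `p ^ e p` shows `z ^ (n + 1) ∈ range f` for every `n`. But `z` being bad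
makes these powers pairwise distinct, contradicting the finiteness of the range.
-/

open Finset

section Multiplicative

variable {M : Type*} [CommMonoid M] (f : ℕ → M)

theorem map_prod_of_pairwise_coprime {ι : Type*}
    (hmul : ∀ m n : ℕ, Nat.Coprime m n → f (m * n) = f m * f n)
    (g : ι → ℕ) {s : Finset ι} (hs : s.Nonempty)
    (hcop : (s : Set ι).Pairwise fun a b => Nat.Coprime (g a) (g b)) :
    f (∏ i ∈ s, g i) = ∏ i ∈ s, f (g i) := by
  induction hs using Finset.Nonempty.cons_induction with
  | singleton a => simp
  | cons a s ha hs ih =>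
    rw [coe_cons, Set.pairwise_insert_of_notMem (mem_coe.not.2 ha)] at hcop
    rw [prod_cons, prod_cons, ← ih hcop.1, hmul]
    exact Nat.Coprime.prod_right fun i hi => (hcop.2 i hi).1

theorem pow_succ_mem_range_of_infinite_primes
    (hmul : ∀ m n : ℕ, Nat.Coprime m n → f (m * n) = f m * f n)
    {S : Set ℕ} (hS : S.Infinite) (hprime : ∀ p ∈ S, p.Prime) (e : ℕ → ℕ) {z : M}
    (hz : ∀ p ∈ S, f (p ^ e p) = z) (n : ℕ) :
    z ^ (n + 1) ∈ Set.range f := by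
  obtain ⟨F, hFS, hcard⟩ := hS.exists_subset_card_eq (n + 1)
  have hcop : (F : Set ℕ).Pairwise fun p q => Nat.Coprime (p ^ e p) (q ^ e q) :=
    fun p hp q hq hpq =>
      ((Nat.coprime_primes (hprime p (hFS hp)) (hprime q (hFS hq))).2 hpq).pow _ _
  refine ⟨∏ p ∈ F, p ^ e p, ?_⟩
  rw [map_prod_of_pairwise_coprime f hmul _ (card_pos.1 (hcard ▸ n.succ_pos)) hcop,
    prod_congr rfl fun p hp => hz p (hFS hp), prod_const, hcard]

theorem finite_setOf_prime_infinite_range_pow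
    (hmul : ∀ m n : ℕ, Nat.Coprime m n → f (m * n) = f m * f n)
    (hrange : (Set.range f).Finite) :
    {p : ℕ | p.Prime ∧ ∃ e, (Set.range fun n : ℕ => f (p ^ e) ^ (n + 1)).Infinite}.Finite := by
  set P := {p : ℕ | p.Prime ∧ ∃ e, (Set.range fun n : ℕ => f (p ^ e) ^ (n + 1)).Infinite}
  choose! e he using fun p (hp : p ∈ P) => hp.2
  have hfiber : ∀ z ∈ Set.range f, {p ∈ P | f (p ^ e p) = z}.Finite := by
    intro z _
    by_contra hinf
    obtain ⟨p, hpP, rfl⟩ := Set.Infinite.nonempty hinf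
    refine he p hpP (hrange.subset ?_)
    rintro _ ⟨n, rfl⟩
    exact pow_succ_mem_range_of_infinite_primes f hmul hinf (fun q hq => hq.1.1) e
      (fun q hq => hq.2) n
  refine (hrange.biUnion hfiber).subset fun p hp => ?_
  exact Set.mem_biUnion (Set.mem_range_self _) ⟨hp, rfl⟩

end Multiplicative

theorem infinite_range_pow_succ {𝕜 : Type*} [NormedDivisionRing 𝕜] {z : 𝕜}
    (h₀ : 0 < ‖z‖) (h₁ : ‖z‖ ≠ 1) : (Set.range fun n : ℕ => z ^ (n + 1)).Infinite := by
  refine Set.infinite_range_of_injective fun m n hmn => ?_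
  have := congrArg norm hmn
  simp only [norm_pow] at this
  exact Nat.succ_injective (pow_right_injective₀ h₀ h₁ this)

theorem stmt_2 (f : ℕ → ℂ)
    (hmul : ∀ m n : ℕ, Nat.Coprime m n → f (m * n) = f m * f n)
    (hrange : (Set.range f).Finite) :
    {p : ℕ | p.Prime ∧ ∃ e : ℕ, 1 ≤ e ∧ 1 < ‖f (p ^ e)‖}.Finite ∧
    {p : ℕ | p.Prime ∧ ∃ e : ℕ, 1 ≤ e ∧ 0 < ‖f (p ^ e)‖ ∧
      ‖f (p ^ e)‖ < 1}.Finite := by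
  have hfin := finite_setOf_prime_infinite_range_pow f hmul hrange
  constructor
  · refine hfin.subset fun p ⟨hp, e, _, he⟩ => ⟨hp, e, ?_⟩
    exact infinite_range_pow_succ (one_pos.trans he) he.ne'
  · refine hfin.subset fun p ⟨hp, e, _, he₀, he₁⟩ => ⟨hp, e, ?_⟩
    exact infinite_range_pow_succ he₀ he₁.ne
end

section
/- Let q ≥ 2 be an integer and let f : ℕ → ℂ be a q-automatic function. Then there exists a positive integer k₀ = k₀(f) with the following property: for every i ≥ 1 and every 0 ≤ r ≤ q^i − 1, if f(q^i n + r) = 0 for all integers n with 1 ≤ n ≤ k₀, then f(q^i n + r) = 0 for all integers n ≥ 1. -/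
/-- The `q`-kernel of `f`: the set of sequences `n ↦ f (q^i n + r)` over integers
`i ≥ 1` and `0 ≤ r ≤ q^i - 1`. -/
def qKernel (q : ℕ) (f : ℕ → ℂ) : Set (ℕ → ℂ) :=
  {g | ∃ i r : ℕ, 1 ≤ i ∧ r ≤ q ^ i - 1 ∧ g = fun n => f (q ^ i * n + r)}

/-- `f` is `q`-automatic if its `q`-kernel is finite. -/
def IsQAutomatic (q : ℕ) (f : ℕ → ℂ) : Prop := (qKernel q f).Finite

/-! A sequence that does not vanish on all `n ≥ 1` has a nonzero value at some `n ≥ 1`. The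
`q`-kernel is finite, so one `k₀` exceeds such a witness for every sequence in it. -/

open Filter

theorem Nat.eventually_forall_le_imp_forall (p : ℕ → Prop) :
    ∀ᶠ K in atTop, (∀ n ≤ K, p n) → ∀ n, p n := by
  by_cases hp : ∀ n, p n
  · exact Eventually.of_forall fun _ _ => hp
  · obtain ⟨m, hm⟩ := not_forall.1 hp
    filter_upwards [eventually_ge_atTop m] with K hmK hK
    exact absurd (hK m hmK) hm

theorem Set.Finite.exists_pos_forall_vanishing_of_vanishing_le {α : Type*} [Zero α]
    {S : Set (ℕ → α)} (hS : S.Finite) :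
    ∃ K, 0 < K ∧ ∀ g ∈ S, (∀ n, 1 ≤ n → n ≤ K → g n = 0) → ∀ n, 1 ≤ n → g n = 0 := by
  have hall : ∀ᶠ K in atTop, ∀ g ∈ S, (∀ n ≤ K, 1 ≤ n → g n = 0) → ∀ n, 1 ≤ n → g n = 0 :=
    (eventually_all_finite hS).2 fun g _ =>
      Nat.eventually_forall_le_imp_forall fun n => 1 ≤ n → g n = 0
  obtain ⟨K, hKpos, hK⟩ := ((eventually_gt_atTop 0).and hall).exists
  exact ⟨K, hKpos, fun g hg hvan => hK g hg fun n hnK hn => hvan n hn hnK⟩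

theorem stmt_4_general (q : ℕ) (f : ℕ → ℂ)
    (hauto : IsQAutomatic q f) :
    ∃ k₀ : ℕ, 0 < k₀ ∧
      ∀ i r : ℕ, 1 ≤ i → r ≤ q ^ i - 1 →
        (∀ n : ℕ, 1 ≤ n → n ≤ k₀ → f (q ^ i * n + r) = 0) →
        ∀ n : ℕ, 1 ≤ n → f (q ^ i * n + r) = 0 := by
  obtain ⟨k₀, hk₀, hvanish⟩ := hauto.exists_pos_forall_vanishing_of_vanishing_le
  exact ⟨k₀, hk₀, fun i r hi hr => hvanish _ ⟨i, r, hi, hr, rfl⟩⟩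

theorem stmt_4 (q : ℕ) (hq : 2 ≤ q) (f : ℕ → ℂ)
    (hauto : IsQAutomatic q f) :
    ∃ k₀ : ℕ, 0 < k₀ ∧
      ∀ i r : ℕ, 1 ≤ i → r ≤ q ^ i - 1 →
        (∀ n : ℕ, 1 ≤ n → n ≤ k₀ → f (q ^ i * n + r) = 0) →
        ∀ n : ℕ, 1 ≤ n → f (q ^ i * n + r) = 0 :=
  stmt_4_general q f hauto
end

section
/- Let q ≥ 2, let f : ℕ → {0,1} be a multiplicative q-automatic function, and assume the set {p prime : f(p^e) = 1 for some e ≥ 1} is infinite. Let s₀ be the number of distinct sequences n ↦ f(q^i n + r) over pairs of integers i ≥ 0 and 0 ≤ r < q^i, and let k₀ be a positive integer such that whenever f(q^i n + r) = 0 for all 1 ≤ n ≤ k₀ (for some i ≥ 1, 0 ≤ r < q^i) then f(q^i n + r) = 0 for all n ≥ 1. Then for every integer r > q·k₀² with f(r) = 1 there exist integers A ≥ 0, C with 1 ≤ C ≤ s₀, and m₀ with 1 ≤ m₀ ≤ k₀, such that f(q^{A + Cn} m₀ + r) = 1 for all integers n ≥ 0. -/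
theorem Set.Finite.exists_lt_le_ncard_map_eq {α : Type*} {S : Set α} (hS : S.Finite)
    {g : ℕ → α} (hg : ∀ i, g i ∈ S) : ∃ a b, a < b ∧ b ≤ S.ncard ∧ g a = g b := by
  have hcard : hS.toFinset.card < (Finset.range (S.ncard + 1)).card := by
    rw [Finset.card_range, ← Set.ncard_eq_toFinset_card S hS]
    omega
  obtain ⟨a, ha, b, hb, hne, hab⟩ :=
    Finset.exists_ne_map_eq_of_card_lt_of_maps_to hcard fun i _ => hS.mem_toFinset.mpr (hg i)
  rw [Finset.mem_range] at ha hb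
  rcases hne.lt_or_gt with h | h
  · exact ⟨a, b, h, by omega, hab⟩
  · exact ⟨b, a, h, by omega, hab.symm⟩

theorem exists_lt_prod_Ico_modEq_one (m : ℕ) [NeZero m] (u : ℕ → ℕ)
    (hu : ∀ j, Nat.Coprime (u j) m) :
    ∃ a b, a < b ∧ ∏ j ∈ Finset.Ico a b, u j ≡ 1 [MOD m] := by
  obtain ⟨a, b, hab, heq⟩ := Set.finite_univ.exists_lt_map_eq_of_forall_mem
    (f := fun n => ((∏ j ∈ Finset.range n, u j : ℕ) : ZMod m)) fun _ => Set.mem_univ _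
  have hunit : IsUnit ((∏ j ∈ Finset.range a, u j : ℕ) : ZMod m) :=
    (ZMod.isUnit_iff_coprime _ m).mpr (Nat.Coprime.prod_left fun j _ => hu j)
  refine ⟨a, b, hab, (ZMod.natCast_eq_natCast_iff _ _ m).mp (hunit.mul_left_cancel ?_)⟩
  rw [← Finset.prod_range_mul_prod_Ico u hab.le, Nat.cast_mul] at heq
  rw [Nat.cast_one, mul_one, ← heq]

section Multiplicative

variable {M : Type*} [CommMonoid M] (f : ℕ → M)
  (hmul : ∀ m n : ℕ, Nat.Coprime m n → f (m * n) = f m * f n)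
include hmul

theorem apply_prod_of_pairwise_coprime (hf1 : f 1 = 1) {ι : Type*} (u : ι → ℕ) (s : Finset ι)
    (hs : (s : Set ι).Pairwise (Function.onFun Nat.Coprime u)) :
    f (∏ j ∈ s, u j) = ∏ j ∈ s, f (u j) := by
  classical
  induction s using Finset.induction_on with
  | empty => simpa using hf1
  | insert a s has ih =>
    rw [Finset.coe_insert, Set.pairwise_insert] at hs
    rw [Finset.prod_insert has, Finset.prod_insert has, ← ih hs.1,
      hmul _ _ (Nat.Coprime.prod_right fun j hj => (hs.2 j hj fun h => has (h ▸ hj)).1)]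

theorem exists_modEq_one_coprime_apply_eq_one (hf1 : f 1 = 1)
    (hinf : {p : ℕ | p.Prime ∧ ∃ e : ℕ, 1 ≤ e ∧ f (p ^ e) = 1}.Infinite)
    (m N : ℕ) [NeZero m] (hN : N ≠ 0) :
    ∃ s, 2 ≤ s ∧ s ≡ 1 [MOD m] ∧ Nat.Coprime s N ∧ f s = 1 := by
  have hdvd : {p : ℕ | p ∣ m * N}.Finite :=
    (m * N).divisors.finite_toSet.subset fun p hp =>
      Nat.mem_divisors.mpr ⟨hp, mul_ne_zero (NeZero.ne m) hN⟩
  set P := (hinf.sdiff hdvd).natEmbedding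
  have hP : ∀ j, (P j : ℕ).Prime ∧ (∃ e, 1 ≤ e ∧ f ((P j : ℕ) ^ e) = 1) ∧ ¬ (P j : ℕ) ∣ m * N :=
    fun j => by obtain ⟨⟨h1, h2⟩, h3⟩ := (P j).2; exact ⟨h1, h2, h3⟩
  choose e he1 hfe using fun j => (hP j).2.1
  have hcop : ∀ j, Nat.Coprime (P j) (m * N) := fun j => ((hP j).1.coprime_iff_not_dvd).mpr (hP j).2.2
  obtain ⟨a, b, hab, hmod⟩ :=
    exists_lt_prod_Ico_modEq_one m (fun j => (P j : ℕ) ^ e j) fun j =>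
      ((hcop j).coprime_mul_right_right).pow_left _
  refine ⟨∏ j ∈ Finset.Ico a b, (P j : ℕ) ^ e j, ?_, hmod, Nat.Coprime.prod_left fun j _ => ((hcop j).coprime_mul_left_right).pow_left _, ?_⟩
  · calc 2 ≤ (P a : ℕ) := (hP a).1.two_le
      _ ≤ (P a : ℕ) ^ e a := Nat.le_self_pow (by have := he1 a; omega) _
      _ ≤ _ := Finset.single_le_prod' (fun j _ => Nat.one_le_pow _ _ (hP j).1.pos)
          (Finset.mem_Ico.mpr ⟨le_rfl, hab⟩)
  · rw [apply_prod_of_pairwise_coprime f hmul hf1]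
    · exact Finset.prod_eq_one fun j _ => hfe j
    · intro i _ j _ hij
      exact ((Nat.coprime_primes (hP i).1 (hP j).1).mpr
        fun h => hij (P.injective (Subtype.ext h))).pow _ _

theorem exists_pos_apply_mul_add_eq_one (hf1 : f 1 = 1)
    (hinf : {p : ℕ | p.Prime ∧ ∃ e : ℕ, 1 ≤ e ∧ f (p ^ e) = 1}.Infinite)
    (m r : ℕ) [NeZero m] (hr : r ≠ 0) (hfr : f r = 1) :
    ∃ n, 1 ≤ n ∧ f (m * n + r) = 1 := by
  obtain ⟨s, hs2, hmod, hcop, hfs⟩ := exists_modEq_one_coprime_apply_eq_one f hmul hf1 hinf m r hr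
  obtain ⟨d, hd⟩ := (Nat.modEq_iff_dvd' (by omega)).mp hmod.symm
  have hd0 : d ≠ 0 := by rintro rfl; omega
  refine ⟨r * d, Nat.one_le_iff_ne_zero.mpr (mul_ne_zero hr hd0), ?_⟩
  have hrs : m * (r * d) + r = r * s := by
    rw [show s = m * d + 1 by omega]
    ring
  rw [hrs, hmul r s hcop.symm, hfr, hfs, one_mul]

end Multiplicative

theorem IsQAutomatic.finite_setOf_kernel {q : ℕ} {f : ℕ → ℂ} (h : IsQAutomatic q f) :
    {g : ℕ → ℂ | ∃ i r : ℕ, r < q ^ i ∧ g = fun n => f (q ^ i * n + r)}.Finite := by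
  refine (h.union (Set.finite_singleton f)).subset ?_
  rintro g ⟨i, r, hr, rfl⟩
  rcases Nat.eq_zero_or_pos i with rfl | hi
  · obtain rfl : r = 0 := by simpa using hr
    right
    simp
  · exact Or.inl ⟨i, r, hi, by omega, rfl⟩

theorem apply_pow_add_mul_mul_add_eq {α : Type*} (f : ℕ → α) (q r A C : ℕ)
    (h : ∀ m, f (q ^ (A + C) * m + r) = f (q ^ A * m + r)) (n m : ℕ) :
    f (q ^ (A + C * n) * m + r) = f (q ^ A * m + r) := by
  induction n generalizing m with
  | zero => simp
  | succ n ih =>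
    calc f (q ^ (A + C * (n + 1)) * m + r) = f (q ^ (A + C * n) * (q ^ C * m) + r) := by
          rw [mul_add_one, ← add_assoc, pow_add, mul_assoc]
      _ = f (q ^ (A + C) * m + r) := by rw [ih, pow_add, mul_assoc]
      _ = f (q ^ A * m + r) := h m

theorem stmt_8_general (q : ℕ) (hq : 2 ≤ q) (f : ℕ → ℂ)
    (h01 : ∀ n : ℕ, f n = 0 ∨ f n = 1)
    (hmul : ∀ m n : ℕ, Nat.Coprime m n → f (m * n) = f m * f n)
    (hauto : IsQAutomatic q f)
    (hinf : {p : ℕ | p.Prime ∧ ∃ e : ℕ, 1 ≤ e ∧ f (p ^ e) = 1}.Infinite)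
    (s₀ : ℕ)
    (hs₀ : ({g : ℕ → ℂ | ∃ i r : ℕ, r < q ^ i ∧ g = fun n => f (q ^ i * n + r)}).ncard = s₀)
    (k₀ : ℕ)
    (hk₀ : ∀ i r : ℕ, 1 ≤ i → r < q ^ i →
      (∀ n : ℕ, 1 ≤ n → n ≤ k₀ → f (q ^ i * n + r) = 0) →
      ∀ n : ℕ, 1 ≤ n → f (q ^ i * n + r) = 0) :
    ∀ r : ℕ, q * k₀ ^ 2 < r → f r = 1 →
      ∃ A C m₀ : ℕ, 1 ≤ C ∧ C ≤ s₀ ∧ 1 ≤ m₀ ∧ m₀ ≤ k₀ ∧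
        ∀ n : ℕ, f (q ^ (A + C * n) * m₀ + r) = 1 := by
  intro r hr hfr
  have hf1 : f 1 = 1 := by simpa [hfr] using (hmul r 1 (Nat.coprime_one_right r)).symm
  have hgood : ∀ A, 1 ≤ A → r < q ^ A → ∃ m₀, 1 ≤ m₀ ∧ m₀ ≤ k₀ ∧ f (q ^ A * m₀ + r) = 1 := by
    intro A hA hrA
    by_contra! hnone
    have : NeZero (q ^ A) := ⟨by positivity⟩
    obtain ⟨n, hn, hfn⟩ := exists_pos_apply_mul_add_eq_one f hmul hf1 hinf (q ^ A) r (by omega) hfr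
    have hzero := hk₀ A r hA hrA fun n h1 h2 => (h01 _).resolve_right (hnone n h1 h2)
    exact one_ne_zero (hfn ▸ hzero n hn)
  have hlt : ∀ i, r < q ^ (r + i) := fun i =>
    (Nat.lt_pow_self (by omega)).trans_le (Nat.pow_le_pow_right (by omega) (by omega))
  obtain ⟨a, b, hab, hbs, hseq⟩ := hauto.finite_setOf_kernel.exists_lt_le_ncard_map_eq
    (g := fun i n => f (q ^ (r + i) * n + r)) fun i => ⟨r + i, r, hlt i, rfl⟩
  obtain ⟨m₀, hm₁, hmk, hfm⟩ := hgood (r + a) (by omega) (hlt a)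
  refine ⟨r + a, b - a, m₀, by omega, by omega, hm₁, hmk, fun n => ?_⟩
  rw [apply_pow_add_mul_mul_add_eq f q r (r + a) (b - a) _ n m₀, hfm]
  intro m
  rw [show r + a + (b - a) = r + b by omega]
  exact (congrFun hseq m).symm

theorem stmt_8 (q : ℕ) (hq : 2 ≤ q) (f : ℕ → ℂ)
    (h01 : ∀ n : ℕ, f n = 0 ∨ f n = 1)
    (hmul : ∀ m n : ℕ, Nat.Coprime m n → f (m * n) = f m * f n)
    (hauto : IsQAutomatic q f)
    (hinf : {p : ℕ | p.Prime ∧ ∃ e : ℕ, 1 ≤ e ∧ f (p ^ e) = 1}.Infinite)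
    (s₀ : ℕ)
    (hs₀ : ({g : ℕ → ℂ | ∃ i r : ℕ, r < q ^ i ∧ g = fun n => f (q ^ i * n + r)}).ncard = s₀)
    (k₀ : ℕ) (hk₀pos : 0 < k₀)
    (hk₀ : ∀ i r : ℕ, 1 ≤ i → r < q ^ i →
      (∀ n : ℕ, 1 ≤ n → n ≤ k₀ → f (q ^ i * n + r) = 0) →
      ∀ n : ℕ, 1 ≤ n → f (q ^ i * n + r) = 0) :
    ∀ r : ℕ, q * k₀ ^ 2 < r → f r = 1 →
      ∃ A C m₀ : ℕ, 1 ≤ C ∧ C ≤ s₀ ∧ 1 ≤ m₀ ∧ m₀ ≤ k₀ ∧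
        ∀ n : ℕ, f (q ^ (A + C * n) * m₀ + r) = 1 :=
  stmt_8_general q hq f h01 hmul hauto hinf s₀ hs₀ k₀ hk₀
end

section
/- Let q ≥ 2 be an integer, let p be an odd prime not dividing q, and let A ≥ 0, C ≥ 1, m₀ ≥ 1, r ≥ 1 be integers with p not dividing m₀. Let d be the multiplicative order of q^C modulo p, and let γ be the exact power of p dividing q^{Cd} − 1 (i.e. p^γ ∣ q^{Cd} − 1 and p^{γ+1} ∤ q^{Cd} − 1). Suppose there exist integers δ > γ and n_δ ≥ 0 such that p^δ exactly divides q^{A + C n_δ} m₀ + r. Then for every integer k ≥ γ there exists n_k ≥ 0 such that p^k exactly divides q^{A + C n_k} m₀ + r. Moreover, if f : ℕ → {0,1} is a multiplicative function satisfying f(q^{A + Cn} m₀ + r) = 1 for all n ≥ 0, then f(p^k) = 1 for all k ≥ γ. -/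
private lemma key1 {p : ℕ} (m : ℕ) (e : ℤ) (hm : 1 ≤ m) (c : ℕ) :
    ((p:ℤ))^(m+1) ∣ (1 + (p:ℤ)^m * e)^c - 1 - (c:ℤ) * (p:ℤ)^m * e := by
  induction c with
  | zero => simp
  | succ c ih =>
    have h2 : ((p:ℤ))^(m+1) ∣ (p:ℤ)^m * (p:ℤ)^m := by
      rw [← pow_add]; exact pow_dvd_pow _ (by omega)
    have hid : (1 + (p:ℤ)^m * e)^(c+1) - 1 - ((c:ℤ)+1) * (p:ℤ)^m * e
        = (1 + (p:ℤ)^m*e) * ((1+(p:ℤ)^m*e)^c - 1 - (c:ℤ)*(p:ℤ)^m*e)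
          + (c:ℤ) * ((p:ℤ)^m * (p:ℤ)^m) * e^2 := by ring
    push_cast
    rw [hid]
    exact dvd_add (ih.mul_left _) ((h2.mul_left _).mul_right _)

private lemma key2 {p : ℕ} (m : ℕ) (e : ℤ) (hm : 1 ≤ m) (c : ℕ) :
    ((p:ℤ))^(2*m+1) ∣ (1 + (p:ℤ)^m * e)^c - 1 - (c:ℤ) * (p:ℤ)^m * e
      - (c.choose 2 : ℤ) * ((p:ℤ)^m * (p:ℤ)^m) * e^2 := by
  induction c with
  | zero => simp
  | succ c ih =>
    have h3 : ((p:ℤ))^(2*m+1) ∣ (p:ℤ)^m * (p:ℤ)^m * (p:ℤ)^m := by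
      rw [← pow_add, ← pow_add]; exact pow_dvd_pow _ (by omega)
    have hch : ((c+1).choose 2 : ℤ) = (c.choose 2 : ℤ) + c := by
      rw [show (2:ℕ) = 1 + 1 from rfl, Nat.choose_succ_succ]
      push_cast [Nat.choose_one_right]; ring
    have hid : (1 + (p:ℤ)^m*e)^(c+1) - 1 - ((c:ℤ)+1)*(p:ℤ)^m*e
          - ((c.choose 2:ℤ)+(c:ℤ))*((p:ℤ)^m*(p:ℤ)^m)*e^2
        = (1+(p:ℤ)^m*e) * ((1+(p:ℤ)^m*e)^c - 1 - (c:ℤ)*(p:ℤ)^m*e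
            - (c.choose 2:ℤ)*((p:ℤ)^m*(p:ℤ)^m)*e^2)
          + (c.choose 2:ℤ) * ((p:ℤ)^m*(p:ℤ)^m*(p:ℤ)^m) * e^3 := by ring
    push_cast
    rw [hch, hid]
    exact dvd_add (ih.mul_left _) ((h3.mul_left _).mul_right _)

private lemma step_lte {p : ℕ} (hp : p.Prime) (hp3 : 3 ≤ p) {m : ℕ} (hm : 1 ≤ m) {e : ℤ}
    (he : ¬ (p:ℤ) ∣ e) :
    ∃ e' : ℤ, ¬ (p:ℤ) ∣ e' ∧ (1 + (p:ℤ)^m * e)^p = 1 + (p:ℤ)^(m+1) * e' := by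
  have h1 := key2 (p := p) m e hm p
  have hch : p ∣ p.choose 2 := hp.dvd_choose_self (by norm_num) (by omega)
  obtain ⟨k, hk⟩ := hch
  have h2 : ((p:ℤ))^(m+2) ∣ (p.choose 2 : ℤ) * ((p:ℤ)^m * (p:ℤ)^m) * e^2 := by
    have : ((p:ℤ))^(m+2) ∣ (p:ℤ) * ((p:ℤ)^m * (p:ℤ)^m) := by
      rw [show (p:ℤ) * ((p:ℤ)^m * (p:ℤ)^m) = (p:ℤ)^(m+m+1) from by ring]
      exact pow_dvd_pow _ (by omega)
    have hcast : (p.choose 2 : ℤ) = (p:ℤ) * k := by exact_mod_cast hk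
    rw [hcast]
    calc ((p:ℤ))^(m+2) ∣ (p:ℤ) * ((p:ℤ)^m * (p:ℤ)^m) := this
      _ ∣ (p:ℤ) * (k:ℤ) * ((p:ℤ)^m * (p:ℤ)^m) * e^2 := ⟨(k:ℤ) * e^2, by ring⟩
  have h1' : ((p:ℤ))^(m+2) ∣ (1 + (p:ℤ)^m * e)^p - 1 - (p:ℤ) * (p:ℤ)^m * e
      - (p.choose 2 : ℤ) * ((p:ℤ)^m * (p:ℤ)^m) * e^2 :=
    dvd_trans (pow_dvd_pow _ (by omega)) h1
  obtain ⟨Y, hY⟩ : ((p:ℤ))^(m+2) ∣ (1 + (p:ℤ)^m * e)^p - 1 - (p:ℤ)^(m+1) * e := by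
    have := dvd_add h1' h2
    have heq : (1 + (p:ℤ)^m * e)^p - 1 - (p:ℤ)^(m+1) * e
        = ((1 + (p:ℤ)^m * e)^p - 1 - (p:ℤ) * (p:ℤ)^m * e
            - (p.choose 2 : ℤ) * ((p:ℤ)^m * (p:ℤ)^m) * e^2)
          + (p.choose 2 : ℤ) * ((p:ℤ)^m * (p:ℤ)^m) * e^2 := by ring
    rw [heq]; exact this
  refine ⟨e + (p:ℤ) * Y, ?_, by linear_combination hY⟩
  intro hc
  exact he ((dvd_add_right (dvd_mul_right (p:ℤ) Y)).mp (by rwa [add_comm] at hc))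

theorem stmt_9 (q p : ℕ) (hq : 2 ≤ q) (hp : p.Prime) (hodd : Odd p)
    (hpq : ¬ p ∣ q) (A C m₀ r : ℕ) (hC : 1 ≤ C) (hm₀ : 1 ≤ m₀) (hr : 1 ≤ r)
    (hpm₀ : ¬ p ∣ m₀)
    (d : ℕ) (hd : d = orderOf ((q : ZMod p) ^ C))
    (γ : ℕ) (hγ : p ^ γ ∣ q ^ (C * d) - 1 ∧ ¬ p ^ (γ + 1) ∣ q ^ (C * d) - 1)
    (hδ : ∃ δ nδ : ℕ, γ < δ ∧
      p ^ δ ∣ q ^ (A + C * nδ) * m₀ + r ∧ ¬ p ^ (δ + 1) ∣ q ^ (A + C * nδ) * m₀ + r) :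
    (∀ k : ℕ, γ ≤ k → ∃ nk : ℕ,
      p ^ k ∣ q ^ (A + C * nk) * m₀ + r ∧ ¬ p ^ (k + 1) ∣ q ^ (A + C * nk) * m₀ + r) ∧
    (∀ f : ℕ → ℂ, (∀ n : ℕ, f n = 0 ∨ f n = 1) →
      (∀ m n : ℕ, Nat.Coprime m n → f (m * n) = f m * f n) →
      (∀ n : ℕ, f (q ^ (A + C * n) * m₀ + r) = 1) →
      ∀ k : ℕ, γ ≤ k → f (p ^ k) = 1) := by
  haveI : Fact p.Prime := ⟨hp⟩
  have hp2 := hp.two_le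
  have hp3 : 3 ≤ p := by obtain ⟨t, ht⟩ := hodd; omega
  have hpint : Prime (p:ℤ) := Nat.prime_iff_prime_int.mp hp
  have hp0 : ((p:ℤ)) ≠ 0 := by exact_mod_cast hp.pos.ne'
  -- p ∣ q^(C*d) - 1
  have hCd1 : 1 ≤ q ^ (C * d) := Nat.one_le_pow _ _ (by omega)
  have hqd : ((q : ZMod p))^(C*d) = 1 := by
    rw [pow_mul, hd]; exact pow_orderOf_eq_one _
  have hpdvd : p ∣ q ^ (C * d) - 1 := by
    have h0 : ((q ^ (C*d) - 1 : ℕ) : ZMod p) = 0 := by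
      rw [Nat.cast_sub hCd1]; push_cast; rw [hqd]; ring
    exact (ZMod.natCast_eq_zero_iff _ _).mp h0
  have hγ1 : 1 ≤ γ := by
    by_contra h
    have hγ0 : γ = 0 := by omega
    exact hγ.2 (by rw [hγ0, zero_add, pow_one]; exact hpdvd)
  -- base: q^(C*d) = 1 + p^γ * E0 with p ∤ E0
  obtain ⟨E0, hE0⟩ := hγ.1
  have hanat : q ^ (C*d) = p ^ γ * E0 + 1 := by omega
  have habase : (q:ℤ)^(C*d) = 1 + (p:ℤ)^γ * (E0:ℤ) := by
    have := congrArg (fun x : ℕ => (x:ℤ)) hanat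
    push_cast at this; linarith
  have he0 : ¬ (p:ℤ) ∣ (E0:ℤ) := by
    intro hc
    have : p ∣ E0 := by exact_mod_cast hc
    obtain ⟨w, hw⟩ := this
    exact hγ.2 ⟨w, by rw [hE0, hw, pow_succ]; ring⟩
  -- LTE iteration
  have iter : ∀ j : ℕ, ∃ e : ℤ, ¬ (p:ℤ) ∣ e ∧
      ((q:ℤ)^(C*d))^(p^j) = 1 + (p:ℤ)^(γ+j) * e := by
    intro j
    induction j with
    | zero => exact ⟨(E0:ℤ), he0, by rw [pow_zero, pow_one, habase]; norm_num⟩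
    | succ j ih =>
      obtain ⟨e, he, hie⟩ := ih
      obtain ⟨e', he', h2⟩ := step_lte hp hp3 (m := γ + j) (by omega) he
      refine ⟨e', he', ?_⟩
      have hexp : ((q:ℤ)^(C*d))^(p^(j+1)) = (((q:ℤ)^(C*d))^(p^j))^p := by
        rw [← pow_mul ((q:ℤ)^(C*d)) (p^j) p, pow_succ p j]
      rw [hexp, hie, h2]
      ring
  set X : ℕ → ℕ := fun n => q ^ (A + C * n) * m₀ + r with hX
  have hXpos : ∀ n, X n ≠ 0 := by
    intro n
    have : 0 < X n := Nat.lt_of_lt_of_le hr (Nat.le_add_left r _)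
    omega
  have hshift : ∀ n t : ℕ, (X (n + d * t) : ℤ)
      = (X n : ℤ) + (q:ℤ)^(A + C*n) * (m₀:ℤ) * (((q:ℤ)^(C*d))^t - 1) := by
    intro n t
    simp only [hX]
    have hexp : A + C * (n + d * t) = (A + C * n) + C * d * t := by ring
    push_cast
    rw [hexp, pow_add, ← pow_mul]
    ring
  have hpQ : ∀ n, ¬ (p:ℤ) ∣ (q:ℤ)^(A + C*n) * (m₀:ℤ) := by
    intro n hc
    rcases hpint.dvd_mul.mp hc with h | h
    · exact hpq (by exact_mod_cast hpint.dvd_of_dvd_pow h)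
    · exact hpm₀ (by exact_mod_cast h)
  -- descend
  have hdescend : ∀ k, γ ≤ k → ∀ n δ', k < δ' → p ^ δ' ∣ X n →
      ∃ n', p ^ k ∣ X n' ∧ ¬ p ^ (k+1) ∣ X n' := by
    intro k hk n δ' hkδ hdvd
    obtain ⟨e, he, hae⟩ := iter (k - γ)
    rw [show γ + (k - γ) = k from by omega] at hae
    refine ⟨n + d * p^(k-γ), ?_, ?_⟩
    · -- p^k divides
      have heq : (X (n + d * p^(k-γ)) : ℤ)
          = (X n : ℤ) + (q:ℤ)^(A+C*n) * (m₀:ℤ) * ((p:ℤ)^k * e) := by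
        rw [hshift, hae]; ring
      have h1 : ((p:ℤ))^k ∣ (X n : ℤ) := by
        have h2 : ((p:ℤ))^δ' ∣ (X n : ℤ) := by exact_mod_cast Int.natCast_dvd_natCast.mpr hdvd
        exact dvd_trans (pow_dvd_pow _ hkδ.le) h2
      have : ((p:ℤ))^k ∣ (X (n + d * p^(k-γ)) : ℤ) := by
        rw [heq]
        exact dvd_add h1 ⟨(q:ℤ)^(A+C*n) * (m₀:ℤ) * e, by ring⟩
      exact_mod_cast this
    · -- p^(k+1) does not divide
      intro hc
      have heq : (X (n + d * p^(k-γ)) : ℤ)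
          = (X n : ℤ) + (q:ℤ)^(A+C*n) * (m₀:ℤ) * ((p:ℤ)^k * e) := by
        rw [hshift, hae]; ring
      have h1 : ((p:ℤ))^(k+1) ∣ (X n : ℤ) := by
        have h2 : ((p:ℤ))^δ' ∣ (X n : ℤ) := by exact_mod_cast Int.natCast_dvd_natCast.mpr hdvd
        exact dvd_trans (pow_dvd_pow _ hkδ) h2
      have hc' : ((p:ℤ))^(k+1) ∣ (X (n + d * p^(k-γ)) : ℤ) := by exact_mod_cast hc
      have h3 : ((p:ℤ))^(k+1) ∣ (q:ℤ)^(A+C*n) * (m₀:ℤ) * ((p:ℤ)^k * e) := by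
        have := dvd_sub hc' h1
        rwa [heq, add_sub_cancel_left] at this
      rw [show (q:ℤ)^(A+C*n) * (m₀:ℤ) * ((p:ℤ)^k * e)
          = (p:ℤ)^k * ((q:ℤ)^(A+C*n) * (m₀:ℤ) * e) from by ring, pow_succ] at h3
      have h4 : (p:ℤ) ∣ (q:ℤ)^(A+C*n) * (m₀:ℤ) * e :=
        (mul_dvd_mul_iff_left (pow_ne_zero k hp0)).mp h3
      rcases hpint.dvd_mul.mp h4 with h | h
      · exact hpQ n h
      · exact he h
  -- bump
  have hbump : ∀ n δ', γ < δ' → p ^ δ' ∣ X n → ¬ p ^ (δ'+1) ∣ X n →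
      ∃ n', p ^ (δ'+1) ∣ X n' := by
    intro n δ' hγδ hdvd hndvd
    obtain ⟨e, he, hae⟩ := iter (δ' - γ)
    rw [show γ + (δ' - γ) = δ' from by omega] at hae
    obtain ⟨A₁, hA1⟩ := hdvd
    have hpA1 : ¬ (p:ℤ) ∣ (A₁:ℤ) := by
      intro hc
      have : p ∣ A₁ := by exact_mod_cast hc
      obtain ⟨w, hw⟩ := this
      exact hndvd ⟨w, by rw [hA1, hw, pow_succ]; ring⟩
    set B : ℤ := (q:ℤ)^(A+C*n) * (m₀:ℤ) * e with hB
    have hpB : ¬ (p:ℤ) ∣ B := by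
      intro hc
      rcases hpint.dvd_mul.mp hc with h | h
      · exact hpQ n h
      · exact he h
    have hBne : ((B : ZMod p)) ≠ 0 := fun hc => hpB ((ZMod.intCast_zmod_eq_zero_iff_dvd _ _).mp hc)
    set c : ℕ := ((((-(A₁:ℤ)) : ℤ) : ZMod p) / (B : ZMod p)).val with hc
    have hkey : (p:ℤ) ∣ (A₁:ℤ) + (c:ℤ) * B := by
      rw [← ZMod.intCast_zmod_eq_zero_iff_dvd]
      push_cast
      rw [hc, ZMod.natCast_val, ZMod.cast_id, div_mul_cancel₀ _ hBne]
      push_cast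
      ring
    refine ⟨n + d * (p^(δ'-γ) * c), ?_⟩
    have heq := hshift n (p^(δ'-γ) * c)
    rw [pow_mul, hae] at heq
    obtain ⟨Z, hZ⟩ := key1 (p := p) δ' e (by omega) c
    have hXn : (X n : ℤ) = (p:ℤ)^δ' * (A₁:ℤ) := by exact_mod_cast congrArg (fun x : ℕ => (x:ℤ)) hA1
    have hXn' : (X (n + d * (p^(δ'-γ) * c)) : ℤ)
        = (p:ℤ)^δ' * ((A₁:ℤ) + (c:ℤ) * B) + (p:ℤ)^(δ'+1) * ((q:ℤ)^(A+C*n) * (m₀:ℤ) * Z) := by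
      rw [heq, hXn, hB]
      have hW : (1 + (p:ℤ)^δ' * e)^c - 1 = (c:ℤ) * (p:ℤ)^δ' * e + (p:ℤ)^(δ'+1) * Z := by
        linarith [hZ]
      rw [hW]; ring
    obtain ⟨w, hw⟩ := hkey
    have : ((p:ℤ))^(δ'+1) ∣ (X (n + d * (p^(δ'-γ) * c)) : ℤ) :=
      ⟨w + (q:ℤ)^(A+C*n) * (m₀:ℤ) * Z, by rw [hXn', hw]; ring⟩
    exact_mod_cast this
  -- unboundedness
  have hub : ∀ k, ∃ n δ', k < δ' ∧ γ < δ' ∧ p ^ δ' ∣ X n := by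
    intro k
    induction k with
    | zero =>
      obtain ⟨δ, nδ, h1, h2, _⟩ := hδ
      exact ⟨nδ, δ, by omega, h1, h2⟩
    | succ k ih =>
      obtain ⟨n, δ', h1, h2, h3⟩ := ih
      by_cases hcmp : k + 1 < δ'
      · exact ⟨n, δ', hcmp, h2, h3⟩
      · set δ'' := (X n).factorization p with hδ''
        have hle : δ' ≤ δ'' := (hp.pow_dvd_iff_le_factorization (hXpos n)).mp h3
        have hd1 : p ^ δ'' ∣ X n := (hp.pow_dvd_iff_le_factorization (hXpos n)).mpr le_rfl
        have hd2 : ¬ p ^ (δ''+1) ∣ X n := fun hcon => by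
          have := (hp.pow_dvd_iff_le_factorization (hXpos n)).mp hcon; omega
        obtain ⟨n', hn'⟩ := hbump n δ'' (by omega) hd1 hd2
        exact ⟨n', δ''+1, by omega, by omega, hn'⟩
  have part1 : ∀ k, γ ≤ k → ∃ nk, p ^ k ∣ X nk ∧ ¬ p ^ (k+1) ∣ X nk := by
    intro k hk
    obtain ⟨n, δ', h1, _, h3⟩ := hub k
    exact hdescend k hk n δ' h1 h3
  refine ⟨part1, ?_⟩
  intro f hf01 hfmul hfval k hk
  obtain ⟨n, h1, h2⟩ := part1 k hk
  obtain ⟨M, hM⟩ := h1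
  have hpM : ¬ p ∣ M := by
    intro hcon
    obtain ⟨w, hw⟩ := hcon
    exact h2 ⟨w, by rw [hM, hw, pow_succ]; ring⟩
  have hcop : Nat.Coprime (p ^ k) M := (hp.coprime_iff_not_dvd.mpr hpM).pow_left _
  have hmul := hfmul (p ^ k) M hcop
  rw [← hM] at hmul
  have hval : f (X n) = 1 := hfval n
  rw [hval] at hmul
  rcases hf01 (p ^ k) with h | h
  · rw [h, zero_mul] at hmul; exact absurd hmul one_ne_zero
  · exact h
end

section
/- Let q be an odd prime and let p be a prime with p ≠ q. Let α be the exact power of q dividing p^{φ(q)} − 1, where φ is Euler's totient function (so α ≥ 1). Then for every integer α₁ > α and every integer u with u ≡ 1 (mod q^α), there exists an arbitrarily large integer k ≥ 1 such that p^k ≡ u (mod q^{α₁}). -/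
/-!
Put `g = p ^ φ(q)`, so that `q ^ α` exactly divides `g - 1`. By lifting the exponent,
`q ^ (α + t)` exactly divides `g ^ q ^ t - 1`, i.e. `g ^ q ^ t = 1 + q ^ (α + t) e` with `q ∤ e`.
Multiplying a power of `g` by `(g ^ q ^ t) ^ m ≡ 1 + m e q ^ (α + t)` shifts it by any prescribed
multiple of `q ^ (α + t)` modulo `q ^ (α + t + 1)`, so every `u ≡ 1 (mod q ^ α)` is a power of
`g` modulo `q ^ α₁`. Since `g ^ q ^ (α₁ - α) ≡ 1 (mod q ^ α₁)`, the exponent can be taken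
arbitrarily large.
-/

theorem Int.not_dvd_of_dvd_sub_one {q : ℕ} (hq : q.Prime) {g : ℤ} (hg : (q : ℤ) ∣ g - 1) :
    ¬ (q : ℤ) ∣ g := fun h ↦
  (Nat.prime_iff_prime_int.mp hq).not_dvd_one (by simpa using dvd_sub h hg)

theorem emultiplicity_pow_prime_pow_sub_one {q : ℕ} (hq : q.Prime) (hodd : Odd q) {g : ℤ} {a : ℕ}
    (ha : 1 ≤ a) (hg : emultiplicity (q : ℤ) (g - 1) = a) (t : ℕ) :
    emultiplicity (q : ℤ) (g ^ q ^ t - 1) = ↑(a + t) := by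
  have hqg : (q : ℤ) ∣ g - 1 := (dvd_pow_self _ (by omega)).trans (emultiplicity_eq_coe.mp hg).1
  simpa [emultiplicity_pow_self_of_prime hq.prime, hg] using
    Int.emultiplicity_pow_sub_pow hq hodd (y := 1) (by simpa using hqg)
      (Int.not_dvd_of_dvd_sub_one hq hqg) (q ^ t)

theorem exists_nat_mul_sub_dvd {q : ℕ} (hq : q.Prime) {c : ℤ} (hc : ¬ (q : ℤ) ∣ c) (d : ℤ) :
    ∃ m : ℕ, (q : ℤ) ∣ c * m - d := by
  have := Fact.mk hq
  have hc' : (c : ZMod q) ≠ 0 := by rwa [Ne, ZMod.intCast_zmod_eq_zero_iff_dvd]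
  refine ⟨((d : ZMod q) / c).val, (ZMod.intCast_zmod_eq_zero_iff_dvd _ _).mp ?_⟩
  push_cast
  rw [ZMod.natCast_zmod_val, mul_div_cancel₀ _ hc', sub_self]

theorem exists_mul_pow_modEq {q : ℕ} (hq : q.Prime) {Q h x y : ℤ} (hQ : (q : ℤ) ∣ Q)
    (hh : Q ∣ h - 1) (hh' : ¬ Q * q ∣ h - 1) (hx : ¬ (q : ℤ) ∣ x) (hxy : x ≡ y [ZMOD Q]) :
    ∃ m : ℕ, x * h ^ m ≡ y [ZMOD Q * q] := by
  obtain ⟨e, he⟩ := hh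
  obtain ⟨d, hd⟩ := hxy.dvd
  have hqe : ¬ (q : ℤ) ∣ e := fun hqe ↦ hh' (he ▸ mul_dvd_mul_left Q hqe)
  have hqxe : ¬ (q : ℤ) ∣ x * e := fun h ↦
    ((Nat.prime_iff_prime_int.mp hq).dvd_or_dvd h).elim hx hqe
  obtain ⟨m, hm⟩ := exists_nat_mul_sub_dvd hq hqxe d
  refine ⟨m, (Int.modEq_iff_dvd.mpr ?_).symm⟩
  have hbinom : Q * q ∣ (1 + Q * e) ^ m - 1 ^ (m - 1) * (Q * e) * m - 1 ^ m :=
    ((mul_dvd_mul_left Q hQ).trans ⟨e ^ 2, by ring⟩).trans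
      (sq_dvd_add_pow_sub_sub (Q * e) 1 m)
  have hsplit : x * h ^ m - y =
      x * ((1 + Q * e) ^ m - 1 ^ (m - 1) * (Q * e) * m - 1 ^ m) + Q * (x * e * m - d) := by
    rw [show h = 1 + Q * e by linear_combination he]
    linear_combination (-1 : ℤ) * hd
  rw [hsplit]
  exact dvd_add (hbinom.mul_left x) (mul_dvd_mul_left Q hm)

theorem exists_pow_modEq_of_modEq_one {q : ℕ} (hq : q.Prime) (hodd : Odd q) {g : ℤ} {a : ℕ}
    (ha : 1 ≤ a) (hg : emultiplicity (q : ℤ) (g - 1) = a) {v : ℤ} (hv : 1 ≡ v [ZMOD q ^ a]) :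
    ∀ n : ℕ, ∃ j : ℕ, g ^ j ≡ v [ZMOD q ^ (a + n)]
  | 0 => ⟨0, by simpa using hv⟩
  | n + 1 => by
    obtain ⟨j, hj⟩ := exists_pow_modEq_of_modEq_one hq hodd ha hg hv n
    have hexact := emultiplicity_eq_coe.mp (emultiplicity_pow_prime_pow_sub_one hq hodd ha hg n)
    have hqg : (q : ℤ) ∣ g - 1 := (dvd_pow_self _ (by omega)).trans (emultiplicity_eq_coe.mp hg).1
    have hqgj : ¬ (q : ℤ) ∣ g ^ j := fun h ↦ Int.not_dvd_of_dvd_sub_one hq hqg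
      ((Nat.prime_iff_prime_int.mp hq).dvd_of_dvd_pow h)
    obtain ⟨m, hm⟩ := exists_mul_pow_modEq hq (dvd_pow_self _ (by omega)) hexact.1
      (by rw [← pow_succ]; exact hexact.2) hqgj hj
    exact ⟨j + q ^ n * m, by rwa [← add_assoc, pow_succ, pow_add g, pow_mul g]⟩

theorem exists_le_pow_modEq {g u N : ℤ} {j T : ℕ} (hT : 0 < T) (hj : g ^ j ≡ u [ZMOD N])
    (hgT : g ^ T ≡ 1 [ZMOD N]) (K : ℕ) : ∃ k, K ≤ k ∧ 1 ≤ k ∧ g ^ k ≡ u [ZMOD N] := by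
  refine ⟨j + T * (K + 1), by nlinarith, by nlinarith, ?_⟩
  have := hj.mul (hgT.pow (K + 1))
  rwa [one_pow, mul_one, ← pow_mul, ← pow_add] at this

theorem stmt_10 (q p : ℕ) (hq : q.Prime) (hqodd : Odd q) (hp : p.Prime)
    (hne : p ≠ q) (α : ℕ)
    (hα : q ^ α ∣ p ^ q.totient - 1 ∧ ¬ q ^ (α + 1) ∣ p ^ q.totient - 1) :
    ∀ α₁ : ℕ, α < α₁ → ∀ u : ℤ, u ≡ 1 [ZMOD (q : ℤ) ^ α] →
      ∀ K : ℕ, ∃ k : ℕ, K ≤ k ∧ 1 ≤ k ∧ (p : ℤ) ^ k ≡ u [ZMOD (q : ℤ) ^ α₁] := by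
  intro α₁ hα₁ u hu K
  have hpow : 1 ≤ p ^ q.totient := Nat.one_le_pow _ _ hp.pos
  have hmult : emultiplicity (q : ℤ) ((p : ℤ) ^ q.totient - 1) = α := by
    rw [show (p : ℤ) ^ q.totient - 1 = ((p ^ q.totient - 1 : ℕ) : ℤ) by push_cast [hpow]; ring,
      Int.natCast_emultiplicity, emultiplicity_eq_coe]
    exact hα
  have hqg : q ∣ p ^ q.totient - 1 := (Nat.modEq_iff_dvd' hpow).mp
    (Nat.ModEq.pow_totient ((Nat.coprime_primes hp hq).mpr hne)).symm
  have hα0 : 1 ≤ α := Nat.one_le_iff_ne_zero.mpr fun h ↦ hα.2 (by simpa [h] using hqg)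
  obtain ⟨j, hj⟩ := exists_pow_modEq_of_modEq_one hq hqodd hα0 hmult hu.symm (α₁ - α)
  have hper := (emultiplicity_eq_coe.mp
    (emultiplicity_pow_prime_pow_sub_one hq hqodd hα0 hmult (α₁ - α))).1
  rw [Nat.add_sub_cancel' hα₁.le] at hj hper
  refine exists_le_pow_modEq (T := q.totient * q ^ (α₁ - α))
    (Nat.mul_pos (Nat.totient_pos.mpr hq.pos) (pow_pos hq.pos _)) (by rwa [pow_mul]) ?_ K
  rw [pow_mul]
  exact (Int.modEq_iff_dvd.mpr hper).symm
end

section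
/- Let q ≥ 2, and let f : ℕ → {0,1} be a multiplicative q-automatic function such that the set P̂₁ = {p prime : f(p^e) = 1 for some e ≥ 1} is infinite. For a prime p coprime to q and δ ≥ 1, let α_{p,δ} be the exact power of q dividing p^{δφ(q)} − 1, and for p ∈ P̂₁ coprime to q let α_p = min{α_{p,δ} : δ ≥ 1, f(p^δ) = 1}. Then there exists α ∈ ℕ such that the set {p ∈ P̂₁ : gcd(p,q) = 1 and α_p = α} is infinite. -/
/-- `alphaP q f p` is the minimum, over `δ ≥ 1` with `f (p^δ) = 1`, of the exact
power of `q` dividing `p^(δ·φ(q)) - 1`. -/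
noncomputable def alphaP (q : ℕ) (f : ℕ → ℂ) (p : ℕ) : ℕ :=
  sInf {a : ℕ | ∃ δ : ℕ, 1 ≤ δ ∧ f (p ^ δ) = 1 ∧
    q ^ a ∣ p ^ (δ * q.totient) - 1 ∧ ¬ q ^ (a + 1) ∣ p ^ (δ * q.totient) - 1}


/-!
If every level set `{α_p = α}` were finite, only finitely many primes `p ∈ P̂₁` coprime to `q`
would have `α_p < K`, for a suitable bound `K`; let `N` be their product. Finiteness of the
`q`-kernel makes `i ↦ (n ↦ f (q ^ i * n + 1))` periodic from some `i₀` on, with period `d`.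
Multiplying `φ(q^i₀ N)` prime powers `p ^ δ` with `f (p ^ δ) = 1` and equal residues modulo
`q^i₀ N` gives `T ≡ 1 (mod q^i₀ N)` with `f T = 1`, and periodicity moves the exact power of `q`
in `T - 1` into a fixed window: `f Y = 1` for `Y = q ^ b' * c + 1` with `N ∣ c`, `q ∤ c`.
As `(X + 1) ^ k - 1 ≡ k X (mod X²)`, `q ^ K ∤ Y ^ φ(q) - 1`, so some prime-power factor `ℓ ^ v`
of `Y` with `f (ℓ ^ v) = 1` has `α_ℓ < K`. Then `ℓ ∣ N ∣ Y - 1`, which is absurd.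
-/
theorem le_of_pow_dvd_pow_mul_of_not_dvd {q i b c : ℕ} (hq : 0 < q) (hc : ¬ q ∣ c)
    (h : q ^ i ∣ q ^ b * c) : i ≤ b := by
  by_contra! hbi
  rw [← Nat.add_sub_cancel' hbi.le, pow_add, Nat.mul_dvd_mul_iff_left (pow_pos hq b)] at h
  exact hc ((dvd_pow_self q (by omega)).trans h)

theorem not_pow_succ_dvd_mul_of_not_dvd {q m c : ℕ} (hq : 0 < q) (hm : 0 < m) (hc : ¬ q ∣ c) :
    ¬ q ^ (m + 1) ∣ m * c := by
  intro h
  have hc0 : c ≠ 0 := by rintro rfl; exact hc (dvd_zero q)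
  obtain ⟨ℓ, hℓ⟩ : ∃ ℓ, c.factorization ℓ < q.factorization ℓ := by
    by_contra! hle
    exact hc ((Nat.factorization_le_iff_dvd hq.ne' hc0).1 (Finsupp.le_def.2 hle))
  have hval := (Nat.factorization_le_iff_dvd (by positivity) (by positivity)).2 h ℓ
  rw [Nat.factorization_pow, Nat.factorization_mul hm.ne' hc0] at hval
  simp only [Finsupp.smul_apply, Finsupp.add_apply, smul_eq_mul] at hval
  have hm_val : m.factorization ℓ < m := Nat.factorization_lt ℓ hm.ne'
  -- `(m + 1) v_ℓ(q) ≤ v_ℓ(m) + v_ℓ(c) < v_ℓ(m) + v_ℓ(q)`, so `m ≤ m v_ℓ(q) < v_ℓ(m) < m`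
  nlinarith

theorem not_pow_dvd_pow_mul_add_one_pow_sub_one {q b c k : ℕ} (hq : 0 < q) (hk : 0 < k)
    (hkb : k < b) (hc : ¬ q ∣ c) : ¬ q ^ (b + k + 1) ∣ (q ^ b * c + 1) ^ k - 1 := by
  intro h
  set X : ℤ := q ^ b * c
  have hZ : (q : ℤ) ^ (b + k + 1) ∣ (X + 1) ^ k - 1 := by
    have := Int.natCast_dvd_natCast.2 h
    push_cast [Nat.one_le_pow', X] at this
    simpa [X] using this
  have hsq : X ^ 2 ∣ (X + 1) ^ k - X * k - 1 := by
    simpa [add_comm] using sq_dvd_add_pow_sub_sub X 1 k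
  have hqX : (q : ℤ) ^ (b + k + 1) ∣ X ^ 2 :=
    (pow_dvd_pow _ (by omega : b + k + 1 ≤ b * 2)).trans
      (by rw [pow_mul]; exact pow_dvd_pow_of_dvd (dvd_mul_right _ _) 2)
  have hlin : (q : ℤ) ^ (b + (k + 1)) ∣ (q : ℤ) ^ b * (k * c) := by
    have := dvd_sub hZ (hqX.trans hsq)
    rwa [show (X + 1) ^ k - 1 - ((X + 1) ^ k - X * k - 1) = (q : ℤ) ^ b * (k * c) by ring,
      add_assoc] at this
  rw [pow_add, mul_dvd_mul_iff_left (by positivity)] at hlin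
  exact not_pow_succ_dvd_mul_of_not_dvd hq hk hc (by exact_mod_cast hlin)

section Multiplicative

variable {R : Type*} [CommMonoidWithZero R] {f : ℕ → R}

theorem exists_prime_pow_of_not_dvd_pow_sub_one [Nontrivial R]
    (h01 : ∀ n : ℕ, f n = 0 ∨ f n = 1)
    (hmul : ∀ m n : ℕ, Nat.Coprime m n → f (m * n) = f m * f n) {Q k n : ℕ}
    (hfn : f n = 1) (hn : ¬ Q ∣ n ^ k - 1) :
    ∃ ℓ v : ℕ, ℓ.Prime ∧ ℓ ∣ n ∧ 1 ≤ v ∧ f (ℓ ^ v) = 1 ∧ ¬ Q ∣ ℓ ^ (v * k) - 1 := by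
  induction n using Nat.recOnPrimeCoprime with
  | zero => exact absurd (by simp [Nat.sub_eq_zero_of_le (zero_pow_le_one k)]) hn
  | prime_pow p v hp =>
    rcases Nat.eq_zero_or_pos v with rfl | hv
    · simp at hn
    · exact ⟨p, v, hp, dvd_pow_self p hv.ne', hv, hfn, by rwa [pow_mul]⟩
  | coprime a b ha hb hab iha ihb =>
    rw [hmul a b hab] at hfn
    have hfa : f a = 1 := (h01 a).resolve_left fun h => by simp [h] at hfn
    have hfb : f b = 1 := (h01 b).resolve_left fun h => by simp [h] at hfn
    by_cases hQa : Q ∣ a ^ k - 1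
    · have hQb : ¬ Q ∣ b ^ k - 1 := by
        intro hQb
        have hmod := ((Nat.modEq_iff_dvd' (Nat.one_le_pow _ _ (by omega))).2 hQa).mul
          ((Nat.modEq_iff_dvd' (Nat.one_le_pow _ _ (by omega))).2 hQb)
        rw [one_mul, ← mul_pow, Nat.modEq_iff_dvd' (Nat.one_le_pow _ _ (by positivity))] at hmod
        exact hn hmod
      obtain ⟨ℓ, v, hℓ, hℓb, hrest⟩ := ihb hfb hQb
      exact ⟨ℓ, v, hℓ, hℓb.mul_left a, hrest⟩
    · obtain ⟨ℓ, v, hℓ, hℓa, hrest⟩ := iha hfa hQa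
      exact ⟨ℓ, v, hℓ, hℓa.mul_right b, hrest⟩

theorem map_prod_prime_pow_eq_one
    (hmul : ∀ m n : ℕ, Nat.Coprime m n → f (m * n) = f m * f n) (h1 : f 1 = 1)
    {F : Finset ℕ} (hF : ∀ p ∈ F, p.Prime) (δ : ℕ → ℕ) (hδ : ∀ p ∈ F, f (p ^ δ p) = 1) :
    f (∏ p ∈ F, p ^ δ p) = 1 := by
  induction F using Finset.induction_on with
  | empty => simpa using h1
  | insert p F hpF ih =>
    have hcop : Nat.Coprime (p ^ δ p) (∏ l ∈ F, l ^ δ l) :=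
      Nat.Coprime.prod_right fun l hl => Nat.coprime_pow_primes _ _ (hF p (by simp))
        (hF l (by simp [hl])) (by rintro rfl; exact hpF hl)
    rw [Finset.prod_insert hpF, hmul _ _ hcop, hδ p (by simp), one_mul,
      ih (fun l hl => hF l (by simp [hl])) (fun l hl => hδ l (by simp [hl]))]

end Multiplicative

theorem alphaP_lt_of_not_pow_dvd {q p v K : ℕ} {f : ℕ → ℂ} (hq : 1 < q) (hp : 1 < p)
    (hv : 1 ≤ v) (hfv : f (p ^ v) = 1) (hK : ¬ q ^ K ∣ p ^ (v * q.totient) - 1) :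
    alphaP q f p < K := by
  have hX : p ^ (v * q.totient) - 1 ≠ 0 := by
    have hexp : v * q.totient ≠ 0 := Nat.mul_ne_zero (by omega) (Nat.totient_pos.2 (by omega)).ne'
    have := Nat.one_lt_pow hexp hp
    omega
  obtain ⟨a, c, hc, hac⟩ := Nat.exists_eq_pow_mul_and_not_dvd hX q hq.ne'
  have haK : a < K := lt_of_not_ge fun h => hK (hac ▸ (pow_dvd_pow q h).mul_right c)
  refine lt_of_le_of_lt (Nat.sInf_le ⟨v, hv, hfv, hac ▸ dvd_mul_right _ _, ?_⟩) haK
  rw [hac]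
  exact fun h => (Nat.lt_succ_self a).not_ge (le_of_pow_dvd_pow_mul_of_not_dvd (by omega) hc h)

theorem exists_dvd_of_alphaP_lt {q : ℕ} {f : ℕ → ℂ}
    (hfin : ∀ α : ℕ, {p : ℕ | p.Prime ∧ (∃ e : ℕ, 1 ≤ e ∧ f (p ^ e) = 1) ∧
      Nat.Coprime p q ∧ alphaP q f p = α}.Finite) (K : ℕ) :
    ∃ N : ℕ, N ≠ 0 ∧ N.Coprime q ∧ ∀ p, p.Prime → (∃ e : ℕ, 1 ≤ e ∧ f (p ^ e) = 1) →
      p.Coprime q → alphaP q f p < K → p ∣ N := by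
  set U := {p : ℕ | p.Prime ∧ (∃ e : ℕ, 1 ≤ e ∧ f (p ^ e) = 1) ∧
    Nat.Coprime p q ∧ alphaP q f p < K}
  have hU : U.Finite := ((Set.finite_lt_nat K).biUnion fun α _ => hfin α).subset
    fun p hp => Set.mem_biUnion hp.2.2.2 ⟨hp.1, hp.2.1, hp.2.2.1, rfl⟩
  refine ⟨∏ p ∈ hU.toFinset, p,
    Finset.prod_ne_zero_iff.2 fun p hp => (hU.mem_toFinset.1 hp).1.ne_zero,
    Nat.Coprime.prod_left fun p hp => (hU.mem_toFinset.1 hp).2.2.1,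
    fun p hp he hpq hpK => Finset.dvd_prod_of_mem _ (hU.mem_toFinset.2 ⟨hp, he, hpq, hpK⟩)⟩

theorem exists_finset_prod_modEq_one {S : Set ℕ} (hS : S.Infinite) {M : ℕ} (hM : M ≠ 0)
    (g : ℕ → ℕ) (hg : ∀ p ∈ S, (g p).Coprime M) :
    ∃ F : Finset ℕ, ↑F ⊆ S ∧ F.Nonempty ∧ ∏ p ∈ F, g p ≡ 1 [MOD M] := by
  have : NeZero M := ⟨hM⟩
  obtain ⟨r, hr⟩ : ∃ r : ZMod M, {p ∈ S | (g p : ZMod M) = r}.Infinite := by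
    by_contra! h
    exact hS ((Set.finite_iUnion h).subset fun p hp => Set.mem_iUnion.2 ⟨_, hp, rfl⟩)
  obtain ⟨F, hFS, hF⟩ := hr.exists_subset_card_eq M.totient
  have hFne : F.Nonempty := Finset.card_pos.1 (hF ▸ Nat.totient_pos.2 (Nat.pos_of_ne_zero hM))
  obtain ⟨p₀, hp₀⟩ := hFne
  refine ⟨F, fun p hp => (hFS hp).1, ⟨p₀, hp₀⟩, ?_⟩
  rw [← ZMod.natCast_eq_natCast_iff]
  calc ((∏ p ∈ F, g p : ℕ) : ZMod M) = ∏ p ∈ F, r := by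
        push_cast
        exact Finset.prod_congr rfl fun p hp => (hFS hp).2
    _ = ((g p₀ ^ M.totient : ℕ) : ZMod M) := by
        rw [Finset.prod_const, hF, ← (hFS hp₀).2]
        push_cast
        rfl
    _ = ((1 : ℕ) : ZMod M) :=
        (ZMod.natCast_eq_natCast_iff _ _ _).2 (Nat.ModEq.pow_totient (hg p₀ (hFS hp₀).1))

theorem exists_one_lt_map_eq_one_modEq_one {f : ℕ → ℂ}
    (hmul : ∀ m n : ℕ, Nat.Coprime m n → f (m * n) = f m * f n)
    (hinf : {p : ℕ | p.Prime ∧ ∃ e : ℕ, 1 ≤ e ∧ f (p ^ e) = 1}.Infinite) {M : ℕ} (hM : M ≠ 0) :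
    ∃ T, 1 < T ∧ f T = 1 ∧ T ≡ 1 [MOD M] := by
  choose! δ hδ using fun p (hp : p ∈ {p : ℕ | p.Prime ∧ ∃ e : ℕ, 1 ≤ e ∧ f (p ^ e) = 1}) => hp.2
  have h1 : f 1 = 1 := by
    obtain ⟨p, hp⟩ := hinf.nonempty
    simpa [(hδ p hp).2] using (hmul (p ^ δ p) 1 (Nat.coprime_one_right _)).symm
  obtain ⟨F, hFS, ⟨p, hpF⟩, hFM⟩ := exists_finset_prod_modEq_one (hinf.sdiff (Set.finite_Iic M)) hM
    (fun p => p ^ δ p) fun p hp => Nat.Coprime.pow_left _ <| (hp.1.1.coprime_iff_not_dvd).2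
      fun hdvd => hp.2 (Nat.le_of_dvd (Nat.pos_of_ne_zero hM) hdvd)
  have hFP : ∀ p ∈ F, p ∈ {p : ℕ | p.Prime ∧ ∃ e : ℕ, 1 ≤ e ∧ f (p ^ e) = 1} :=
    fun p hp => (hFS hp).1
  refine ⟨_, ?_, map_prod_prime_pow_eq_one hmul h1 (fun p hp => (hFP p hp).1) δ
    (fun p hp => (hδ p (hFP p hp)).2), hFM⟩
  have hpT : p ∣ ∏ p ∈ F, p ^ δ p :=
    (dvd_pow_self p (by have := (hδ p (hFP p hpF)).1; omega)).trans (Finset.dvd_prod_of_mem _ hpF)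
  have hT0 : ∏ p ∈ F, p ^ δ p ≠ 0 :=
    Finset.prod_ne_zero_iff.2 fun p hp => pow_ne_zero _ (hFP p hp).1.ne_zero
  have hT1 : ∏ p ∈ F, p ^ δ p ≠ 1 := fun h => (hFP p hpF).1.not_dvd_one (h ▸ hpT)
  omega

theorem exists_periodic_of_isQAutomatic {q : ℕ} (hq : 2 ≤ q) {f : ℕ → ℂ}
    (hauto : IsQAutomatic q f) :
    ∃ i₀ d : ℕ, 0 < d ∧ ∀ D n : ℕ, f (q ^ (i₀ + D * d) * n + 1) = f (q ^ i₀ * n + 1) := by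
  have hmaps : Set.MapsTo (fun i n => f (q ^ i * n + 1)) (Set.Ici 1) (qKernel q f) :=
    fun i hi => ⟨i, 1, hi, by have := Nat.one_lt_pow (n := i) (by simp at hi; omega) hq; omega, rfl⟩
  obtain ⟨i, -, j, -, hij, heq⟩ := (Set.Ici_infinite 1).exists_lt_map_eq_of_mapsTo hmaps hauto
  refine ⟨i, j - i, by omega, fun D => ?_⟩
  induction D with
  | zero => simp
  | succ D ih =>
    intro n
    calc f (q ^ (i + (D + 1) * (j - i)) * n + 1)
        = f (q ^ (i + D * (j - i)) * (q ^ (j - i) * n) + 1) := by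
          rw [show i + (D + 1) * (j - i) = i + D * (j - i) + (j - i) by ring, pow_add, mul_assoc]
      _ = f (q ^ j * n + 1) := by
          rw [ih, ← mul_assoc, ← pow_add, Nat.add_sub_cancel' hij.le]
      _ = f (q ^ i * n + 1) := (congrFun heq n).symm

theorem exists_pow_mul_add_one_eq_of_periodic {β : Type*} {f : ℕ → β} {q i₀ d b : ℕ}
    (hd : 0 < d) (hper : ∀ D n : ℕ, f (q ^ (i₀ + D * d) * n + 1) = f (q ^ i₀ * n + 1))
    (hb : i₀ ≤ b) (c R : ℕ) :
    ∃ b', i₀ + R * d ≤ b' ∧ b' < i₀ + R * d + d ∧ f (q ^ b * c + 1) = f (q ^ b' * c + 1) := by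
  set e := (b - i₀) % d
  refine ⟨i₀ + R * d + e, by omega, by have := Nat.mod_lt (b - i₀) hd; omega, ?_⟩
  have hbe : b = i₀ + (b - i₀) / d * d + e := by have := Nat.div_add_mod' (b - i₀) d; omega
  calc f (q ^ b * c + 1) = f (q ^ (i₀ + (b - i₀) / d * d) * (q ^ e * c) + 1) := by
        rw [← mul_assoc, ← pow_add, ← hbe]
    _ = f (q ^ (i₀ + R * d) * (q ^ e * c) + 1) := by rw [hper, hper]
    _ = f (q ^ (i₀ + R * d + e) * c + 1) := by rw [pow_add _ (i₀ + R * d) e, mul_assoc]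

theorem stmt_11 (q : ℕ) (hq : 2 ≤ q) (f : ℕ → ℂ)
    (h01 : ∀ n : ℕ, f n = 0 ∨ f n = 1)
    (hmul : ∀ m n : ℕ, Nat.Coprime m n → f (m * n) = f m * f n)
    (hauto : IsQAutomatic q f)
    (hinf : {p : ℕ | p.Prime ∧ ∃ e : ℕ, 1 ≤ e ∧ f (p ^ e) = 1}.Infinite) :
    ∃ α : ℕ, {p : ℕ | p.Prime ∧ (∃ e : ℕ, 1 ≤ e ∧ f (p ^ e) = 1) ∧
      Nat.Coprime p q ∧ alphaP q f p = α}.Infinite := by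
  by_contra! hfin
  obtain ⟨i₀, d, hd, hper⟩ := exists_periodic_of_isQAutomatic hq hauto
  -- the window `[B, B + d)` lies above `φ(q)`, and `K` exceeds it by `φ(q)`
  set B := i₀ + (q.totient + 1) * d
  set K := B + d + q.totient
  obtain ⟨N, hN, hNq, hdvdN⟩ := exists_dvd_of_alphaP_lt hfin K
  obtain ⟨T, hT, hfT, hTM⟩ := exists_one_lt_map_eq_one_modEq_one hmul hinf
    (mul_ne_zero (pow_ne_zero i₀ (by omega : q ≠ 0)) hN)
  obtain ⟨b, c, hc, hbc⟩ := Nat.exists_eq_pow_mul_and_not_dvd (n := T - 1) (by omega) q (by omega)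
  have hMT : q ^ i₀ * N ∣ q ^ b * c := hbc ▸ (Nat.modEq_iff_dvd' hT.le).1 hTM.symm
  have hNc : N ∣ c := (hNq.pow_right b).dvd_of_dvd_mul_left (dvd_of_mul_left_dvd hMT)
  obtain ⟨b', hBb', hb'K, hfb'⟩ := exists_pow_mul_add_one_eq_of_periodic hd hper
    (le_of_pow_dvd_pow_mul_of_not_dvd (by omega) hc (dvd_of_mul_right_dvd hMT)) c (q.totient + 1)
  have hfY : f (q ^ b' * c + 1) = 1 := by rw [← hfb', ← hbc, Nat.sub_add_cancel hT.le, hfT]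
  have hYK : ¬ q ^ K ∣ (q ^ b' * c + 1) ^ q.totient - 1 := fun h =>
    not_pow_dvd_pow_mul_add_one_pow_sub_one (by omega) (Nat.totient_pos.2 (by omega))
      (by nlinarith) hc ((pow_dvd_pow q (by omega)).trans h)
  obtain ⟨ℓ, v, hℓ, hℓY, hv, hfv, hℓK⟩ := exists_prime_pow_of_not_dvd_pow_sub_one h01 hmul hfY hYK
  have hℓ_not_dvd : ∀ x, ℓ ∣ x → x ∣ q ^ b' * c → False := fun x hx hxY =>
    hℓ.not_dvd_one ((Nat.dvd_add_right (hx.trans hxY)).1 hℓY)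
  have hℓq : ℓ.Coprime q := hℓ.coprime_iff_not_dvd.2 fun h =>
    hℓ_not_dvd q h ((dvd_pow_self q (by nlinarith)).mul_right c)
  have hℓα : alphaP q f ℓ < K := alphaP_lt_of_not_pow_dvd (by omega) hℓ.one_lt hv hfv hℓK
  exact hℓ_not_dvd N (hdvdN ℓ hℓ ⟨v, hv, hfv⟩ hℓq hℓα) (hNc.mul_left _)
end
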